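/- Let P, Q be regular ω-posets and φ : SP → SQ a continuous map. Then the relation ⊐_φ (defined by q ⊐_φ p iff q_S ⊇ φ[p̄_S]) is the unique strong refiner ⊐ with S_⊐ = φ, where a strong refiner is a ∧-preserving refiner satisfying ⊐ = ▷ * ⊐. -/

import Mathlib

namespace OP

section OmegaPoset

variable (P : Type*) [PartialOrder P]

/-- The n-th cone of the poset: `cone 0` is the set of maximal elements. -/
def cone : ℕ → Set P
  | 0 => {p | ∀ q, ¬ p < q}
  | n + 1 => {p | ∀ q, p < q → q ∈ cone n}

/-- The n-th level: atoms (minimal elements) of the n-th cone. -/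
def level (n : ℕ) : Set P := {p | p ∈ cone P n ∧ ∀ q, q < p → q ∉ cone P n}

/-- An ω-poset: all levels finite and every element in some cone. -/
def IsOmegaPoset : Prop := (∀ n, (level P n).Finite) ∧ ∀ p : P, ∃ n, p ∈ cone P n

variable {P}

/-- `refines A C` : every element of `A` lies below some element of `C` (`A ≤ C`). -/
def refines (A C : Set P) : Prop := ∀ a ∈ A, ∃ c ∈ C, a ≤ c

/-- A cap is a subset refined by some level. -/
def IsCap (C : Set P) : Prop := ∃ n, refines (level P n) C

/-- A selector meets every cap. -/
def IsSelector (S : Set P) : Prop := ∀ C : Set P, IsCap C → (S ∩ C).Nonempty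

/-- `wedge p q` : `p` and `q` have a common lower bound. -/
def wedge (p q : P) : Prop := ∃ r, r ≤ p ∧ r ≤ q

def wedgeSet (p : P) : Set P := {q | wedge p q}

/-- The adjacency relation `p ⌅ q`. -/
def barwedge (p q : P) : Prop := ∀ C : Set P, IsCap C → ∃ c ∈ C, wedge p c ∧ wedge c q

/-- `p ⊲_C q`. -/
def starBelowOn (C : Set P) (p q : P) : Prop := ∀ c ∈ C, wedge p c → c ≤ q

/-- The star-below relation `p ⊲ q`. -/
def starBelow (p q : P) : Prop := ∃ n, starBelowOn (level P n) p q

/-- A clique: pairwise adjacent set. -/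
def IsClique (X : Set P) : Prop := ∀ p ∈ X, ∀ q ∈ X, barwedge p q

/-- Unbounded subset: meets `C^≥` for every cap `C`. -/
def IsUnbounded (X : Set P) : Prop := ∀ C : Set P, IsCap C → ∃ u ∈ X, ∃ c ∈ C, u ≤ c

variable (P)

/-- Regularity: every level is eventually star-refined by a later level. -/
def IsRegular : Prop :=
  ∀ m, ∃ n, m < n ∧ ∀ p ∈ level P n, ∃ q ∈ level P m, starBelow p q

/-- The spectrum: minimal selectors. -/
def Spec : Set (Set P) := {S | IsSelector S ∧ ∀ T ⊆ S, IsSelector T → T = S}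

def SpecT : Type _ := {S : Set P // S ∈ Spec P}

instance : TopologicalSpace (SpecT P) :=
  TopologicalSpace.generateFrom {U | ∃ p : P, U = {S : SpecT P | p ∈ S.1}}

/-- The clique-spectrum: unbounded maximal cliques. -/
def CliqueSpec : Set (Set P) :=
  {X | IsUnbounded X ∧ IsClique X ∧ ∀ Y : Set P, IsClique Y → X ⊆ Y → Y = X}

def CliqueSpecT : Type _ := {X : Set P // X ∈ CliqueSpec P}

instance : TopologicalSpace (CliqueSpecT P) :=
  TopologicalSpace.generateFrom {U | ∃ p : P, U = {X : CliqueSpecT P | p ∉ X.1}}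

variable {P}

/-- The basic open set `p_S`. -/
def pSOpen (p : P) : Set (SpecT P) := {S | p ∈ S.1}

/-- The closed set `p̄_S = {S : S ⊆ p^∧}`. -/
def pSBar (p : P) : Set (SpecT P) := {S | S.1 ⊆ wedgeSet p}

/-- Prime ω-poset: every basic open set is nonempty. -/
def IsPrimePoset (P : Type*) [PartialOrder P] : Prop := ∀ p : P, (pSOpen p).Nonempty

end OmegaPoset

end OP

namespace OP

section Refiners

variable {P Q : Type*} [PartialOrder P] [PartialOrder Q]

/-- A refiner: every cap of `Q` is refined through the relation by some cap of `P`. -/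
def IsRefinerRel (R : Q → P → Prop) : Prop :=
  ∀ C : Set Q, IsCap C → ∃ B : Set P, IsCap B ∧ ∀ b ∈ B, ∃ c ∈ C, R c b

/-- `∧`-preserving: `⊐ ∘ ∧ ∘ ⊏ ⊆ ∧`. -/
def WedgePres (R : Q → P → Prop) : Prop :=
  ∀ q p p' q', R q p → wedge p p' → R q' p' → wedge q q'

/-- `⌅`-preserving: `⊐ ∘ ⌅ ∘ ⊏ ⊆ ⌅`. -/
def BarwedgePres (R : Q → P → Prop) : Prop :=
  ∀ q p p' q', R q p → barwedge p p' → R q' p' → barwedge q q'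

/-- The star `⊐*` of a relation: `q ⊐* p` iff some cap `C` has `C ∩ p^∧ ⊏ q`. -/
def relStar (R : Q → P → Prop) (q : Q) (p : P) : Prop :=
  ∃ C : Set P, IsCap C ∧ ∀ c ∈ C, wedge p c → R q c

/-- Composition `▷ ∘ ⊐` with the star-above relation on `Q`. -/
def starAboveComp (R : Q → P → Prop) : Q → P → Prop :=
  fun q p => ∃ q', starBelow q' q ∧ R q' p

/-- A strong refiner: a `∧`-preserving refiner with `⊐ = ▷ * ⊐`. -/
def IsStrongRefiner (R : Q → P → Prop) : Prop :=
  IsRefinerRel R ∧ WedgePres R ∧ ∀ q p, R q p ↔ relStar (starAboveComp R) q p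

/-- `φ` is the continuous map associated to `R`, i.e. `φ(S) = S^{⊏ ⊲}`. -/
def specMapOf (R : Q → P → Prop) (φ : SpecT P → SpecT Q) : Prop :=
  ∀ S : SpecT P, (φ S).1 = {r : Q | ∃ p ∈ S.1, ∃ q, R q p ∧ starBelow q r}

/-- The relation `⊒_φ`: `q ⊒_φ p` iff `q̄_S ⊇ φ[p̄_S]`. -/
def relBarPhi (φ : SpecT P → SpecT Q) (q : Q) (p : P) : Prop :=
  ∀ S : SpecT P, S ∈ pSBar p → φ S ∈ pSBar q

/-- The relation `⊐_φ`: `q ⊐_φ p` iff `q_S ⊇ φ[p̄_S]`. -/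
def relPhi (φ : SpecT P → SpecT Q) (q : Q) (p : P) : Prop :=
  ∀ S : SpecT P, S ∈ pSBar p → φ S ∈ pSOpen q

/-- An arrow: a finite relation with `← ∘ ⌅` co-surjective. -/
def IsArrow (A : Q → P → Prop) : Prop :=
  {x : Q × P | A x.1 x.2}.Finite ∧ ∀ p : P, ∃ q p', A q p' ∧ barwedge p' p

/-- `A ≤ B` for relations: `A ⊆ ≤ ∘ B ∘ ≥`. -/
def arrowLe (A B : Q → P → Prop) : Prop :=
  ∀ q p, A q p → ∃ q' p', q ≤ q' ∧ p ≤ p' ∧ B q' p'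

/-- The relation `⟨←` of an arrow: `q ⟨← p` iff `p^{⌅→} ⊲ q`. -/
def angleRel (A : Q → P → Prop) (q : Q) (p : P) : Prop :=
  ∀ q', (∃ p', barwedge p p' ∧ A q' p') → starBelow q' q

/-- The relation `⋂ₙ (←ₙ)̄_S` on spectra determined by a sequence of arrows. -/
def seqGraph (A : ℕ → Q → P → Prop) (T : SpecT Q) (S : SpecT P) : Prop :=
  ∀ n, ∃ q p, A n q p ∧ T.1 ⊆ wedgeSet q ∧ S.1 ⊆ wedgeSet p

end Refiners

end OP

/-!
A continuous map `φ` between spectra is read off basic open sets: by regularity every point of a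
spectrum has elements `p` whose closed set `p̄_S` fits inside any given basic neighbourhood, so
`q ∈ φ S` iff `q ⊐_φ p` for some `p ∈ S`, and `⊐_φ` induces `φ`. Since levels are finite, Zorn's
lemma produces minimal selectors inside any selector, which turns "every point of `p̄_S` contains a
witness" into "some cap consists of witnesses". Applied to the witnesses of `▷ ∘ R`, this shows that
`(▷ ∘ R)* = ⊐_φ` for every downward closed `R` inducing `φ`: for `R = ⊐_φ` this is the star
condition, and for a strong refiner `R = (▷ ∘ R)*` it is uniqueness.
-/

open Filter

namespace OP

section Levels

variable {P : Type*} [PartialOrder P]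

lemma cone_succ_subset (n : ℕ) : cone P n ⊆ cone P (n + 1) := by
  induction n with
  | zero => exact fun p hp q hpq => absurd hpq (hp q)
  | succ n ih => exact fun p hp q hpq => ih (hp q hpq)

lemma cone_mono : Monotone (cone P) := monotone_nat_of_le_succ cone_succ_subset

lemma exists_mem_level_le {n : ℕ} {p : P} (hp : p ∈ cone P n) : ∃ q ∈ level P n, q ≤ p := by
  induction n generalizing p with
  | zero => exact ⟨p, ⟨hp, fun q hqp hq => hq p hqp⟩, le_rfl⟩
  | succ n ih =>
    by_cases hmin : ∀ r, r < p → r ∉ cone P (n + 1)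
    · exact ⟨p, ⟨hp, hmin⟩, le_rfl⟩
    push Not at hmin
    obtain ⟨r, hrp, hr⟩ := hmin
    obtain ⟨q, ⟨hq, hqmin⟩, hqp⟩ := ih (hr p hrp)
    by_cases hqmin' : ∀ s, s < q → s ∉ cone P (n + 1)
    · exact ⟨q, ⟨cone_succ_subset n hq, hqmin'⟩, hqp⟩
    push Not at hqmin'
    obtain ⟨s, hsq, hs⟩ := hqmin'
    -- anything below `s` in `cone (n + 1)` would put `s` in `cone n`, below the minimal `q`
    exact ⟨s, ⟨hs, fun t hts ht => hqmin s hsq (ht s hts)⟩, hsq.le.trans hqp⟩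

lemma refines.trans {A B C : Set P} (hAB : refines A B) (hBC : refines B C) : refines A C := by
  intro a ha
  obtain ⟨b, hb, hab⟩ := hAB a ha
  obtain ⟨c, hc, hbc⟩ := hBC b hb
  exact ⟨c, hc, hab.trans hbc⟩

lemma level_succ_refines (n : ℕ) : refines (level P (n + 1)) (level P n) := by
  rintro p ⟨hp, hpmin⟩
  by_cases hpn : p ∈ cone P n
  · exact ⟨p, ⟨hpn, fun r hrp hr => hpmin r hrp (cone_succ_subset n hr)⟩, le_rfl⟩
  cases n with
  | zero =>
    simp only [cone, Set.mem_ofPred_eq, not_forall, not_not] at hpn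
    obtain ⟨q, hpq⟩ := hpn
    exact ⟨q, ⟨hp q hpq, fun r hrq hr => hr q hrq⟩, hpq.le⟩
  | succ m =>
    simp only [cone, Set.mem_ofPred_eq, not_forall] at hpn
    obtain ⟨q, hpq, hq⟩ := hpn
    exact ⟨q, ⟨hp q hpq, fun r hrq hr => hq (hr q hrq)⟩, hpq.le⟩

lemma refines.of_level_le {C : Set P} {m n : ℕ} (h : refines (level P m) C) (hmn : m ≤ n) :
    refines (level P n) C := by
  induction hmn with
  | refl => exact h
  | step _ ih => exact (level_succ_refines _).trans ih

lemma isCap_level (n : ℕ) : IsCap (level P n) := ⟨n, fun a ha => ⟨a, ha, le_rfl⟩⟩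

lemma wedge.symm {p q : P} (h : wedge p q) : wedge q p :=
  let ⟨r, hrp, hrq⟩ := h
  ⟨r, hrq, hrp⟩

lemma wedgeSet_mono : Monotone (wedgeSet : P → Set P) :=
  fun _ _ hpp' _ ⟨r, hrp, hrq⟩ => ⟨r, hrp.trans hpp', hrq⟩

lemma isUpperSet_wedgeSet (p : P) : IsUpperSet (wedgeSet p) :=
  fun _ _ hqq' ⟨r, hrp, hrq⟩ => ⟨r, hrp, hrq.trans hqq'⟩

lemma starBelow.trans_le {p q q' : P} (h : starBelow p q) (hqq' : q ≤ q') : starBelow p q' :=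
  let ⟨k, hk⟩ := h
  ⟨k, fun c hc hpc => (hk c hc hpc).trans hqq'⟩

lemma relStar_of_le {Q : Type*} {R : Q → P → Prop} {q : Q} {p p' : P} (h : relStar R q p)
    (hp'p : p' ≤ p) : relStar R q p' :=
  let ⟨C, hC, hCR⟩ := h
  ⟨C, hC, fun c hc hp'c => hCR c hc (wedgeSet_mono hp'p hp'c)⟩

end Levels

section Selectors

variable {P : Type*} [PartialOrder P]

lemma isSelector_upperClosure {W : Set P} (h : ∃ᶠ n in atTop, (level P n ∩ W).Nonempty) :
    IsSelector (upperClosure W : Set P) := by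
  rintro C ⟨m, hmC⟩
  obtain ⟨n, hmn, z, hz, hzW⟩ := frequently_atTop.1 h m
  obtain ⟨c, hc, hzc⟩ := hmC.of_level_le hmn z hz
  exact ⟨c, mem_upperClosure.2 ⟨z, hzW, hzc⟩, hc⟩

lemma IsCap.exists_finite_subset (hfin : ∀ n, (level P n).Finite) {C : Set P} (hC : IsCap C) :
    ∃ C₀ ⊆ C, C₀.Finite ∧ IsCap C₀ := by
  obtain ⟨m, hmC⟩ := hC
  choose! f hfC hle using hmC
  exact ⟨f '' level P m, Set.image_subset_iff.2 hfC, (hfin m).image f,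
    m, fun a ha => ⟨f a, Set.mem_image_of_mem f ha, hle a ha⟩⟩

lemma isSelector_sInter_of_isChain (hfin : ∀ n, (level P n).Finite) {c : Set (Set P)}
    (hne : c.Nonempty) (hc : IsChain (· ⊆ ·) c) (hsel : ∀ T ∈ c, IsSelector T) :
    IsSelector (⋂₀ c) := by
  intro C hC
  obtain ⟨C₀, hC₀C, hC₀fin, hC₀⟩ := hC.exists_finite_subset hfin
  by_contra hempty
  have hcover : (hC₀fin.toFinset : Set P) ⊆ ⋃ T ∈ c, Tᶜ := by
    intro x hx
    by_contra hx'
    simp only [Set.mem_iUnion, Set.mem_compl_iff, not_exists, not_not] at hx'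
    exact hempty ⟨x, hx', hC₀C (hC₀fin.mem_toFinset.1 hx)⟩
  have hdir : DirectedOn (fun T T' : Set P => Tᶜ ⊆ T'ᶜ) c := fun T hT T' hT' =>
    (hc.total hT hT').elim (fun h => ⟨T, hT, le_rfl, Set.compl_subset_compl.2 h⟩)
      (fun h => ⟨T', hT', Set.compl_subset_compl.2 h, le_rfl⟩)
  obtain ⟨T, hT, hTC₀⟩ := hdir.exists_mem_subset_of_finset_subset_biUnion hne hcover
  obtain ⟨x, hxT, hxC₀⟩ := hsel T hT C₀ hC₀
  exact hTC₀ (hC₀fin.mem_toFinset.2 hxC₀) hxT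

lemma IsSelector.exists_spec_subset (hfin : ∀ n, (level P n).Finite) {S : Set P}
    (hS : IsSelector S) : ∃ T ∈ Spec P, T ⊆ S := by
  obtain ⟨T, -, hTmin⟩ := zorn_superset_nonempty {T | IsSelector T ∧ T ⊆ S}
    (fun c hcS hc hne => ⟨⋂₀ c,
      ⟨isSelector_sInter_of_isChain hfin hne hc fun T hT => (hcS hT).1,
        (Set.sInter_subset_of_mem hne.some_mem).trans (hcS hne.some_mem).2⟩,
      fun _ => Set.sInter_subset_of_mem⟩) S ⟨hS, subset_rfl⟩
  exact ⟨T, ⟨hTmin.1.1, fun T' hT'T hT' =>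
    hT'T.antisymm (hTmin.2 ⟨hT', hT'T.trans hTmin.1.2⟩ hT'T)⟩, hTmin.1.2⟩

end Selectors

namespace SpecT

variable {P : Type*} [PartialOrder P] (S : SpecT P)

lemma exists_isCap_inter_eq_singleton {p : P} (hp : p ∈ S.1) :
    ∃ C, IsCap C ∧ S.1 ∩ C = {p} := by
  have hnot : ¬ IsSelector (S.1 \ {p}) := fun h =>
    ((S.2.2 _ Set.sdiff_subset h).ge hp).2 rfl
  simp only [IsSelector, not_forall, Set.not_nonempty_iff_eq_empty] at hnot
  obtain ⟨C, hC, hempty⟩ := hnot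
  have hsub : S.1 ∩ C ⊆ {p} := fun x ⟨hxS, hxC⟩ => by
    by_contra hxp
    exact (hempty ▸ ⟨⟨hxS, hxp⟩, hxC⟩ : x ∈ (∅ : Set P))
  obtain ⟨y, hy⟩ := S.2.1 C hC
  refine ⟨C, hC, hsub.antisymm ?_⟩
  rintro x rfl
  exact hsub hy ▸ hy

lemma mem_of_le {b e : P} (hb : b ∈ S.1) (hbe : b ≤ e) : e ∈ S.1 := by
  obtain ⟨C, ⟨j, hjC⟩, hSC⟩ := S.exists_isCap_inter_eq_singleton hb
  -- replacing `b` by `e` in `C` still gives a cap, and `S` meets it only in `e`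
  have hcap : IsCap (C \ {b} ∪ {e}) := by
    refine ⟨j, fun a ha => ?_⟩
    obtain ⟨c, hc, hac⟩ := hjC a ha
    rcases eq_or_ne c b with rfl | hcb
    · exact ⟨e, Or.inr rfl, hac.trans hbe⟩
    · exact ⟨c, Or.inl ⟨hc, hcb⟩, hac⟩
  obtain ⟨y, hyS, hy | rfl⟩ := S.2.1 _ hcap
  · exact absurd (hSC ▸ ⟨hyS, hy.1⟩ : y ∈ ({b} : Set P)) hy.2
  · exact hyS

lemma exists_mem_inter_wedge {u : P} (hu : u ∈ S.1) {C : Set P} (hC : IsCap C) :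
    ∃ y ∈ S.1 ∩ C, wedge y u := by
  obtain ⟨Cu, ⟨m₁, hCu⟩, hSCu⟩ := S.exists_isCap_inter_eq_singleton hu
  obtain ⟨m₂, hmC⟩ := hC
  have hcap : IsCap (Cu \ {u} ∪ {c | c ∈ C ∧ wedge c u}) := by
    refine ⟨max m₁ m₂, fun a ha => ?_⟩
    obtain ⟨e, he, hae⟩ := hCu.of_level_le (le_max_left _ _) a ha
    rcases eq_or_ne e u with rfl | heu
    · obtain ⟨c, hc, hac⟩ := hmC.of_level_le (le_max_right _ _) a ha
      exact ⟨c, Or.inr ⟨hc, a, hac, hae⟩, hac⟩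
    · exact ⟨e, Or.inl ⟨he, heu⟩, hae⟩
  obtain ⟨y, hyS, hy | ⟨hyC, hyu⟩⟩ := S.2.1 _ hcap
  · exact absurd (hSCu ▸ ⟨hyS, hy.1⟩ : y ∈ ({u} : Set P)) hy.2
  · exact ⟨y, ⟨hyS, hyC⟩, hyu⟩

lemma wedge_of_mem {u s : P} (hu : u ∈ S.1) (hs : s ∈ S.1) : wedge u s := by
  have hsel : IsSelector (S.1 ∩ {t | wedge t u}) := fun C hC =>
    let ⟨y, ⟨hyS, hyC⟩, hyu⟩ := S.exists_mem_inter_wedge hu hC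
    ⟨y, ⟨hyS, hyu⟩, hyC⟩
  exact ((S.2.2 _ Set.inter_subset_left hsel).ge hs).2.symm

lemma mem_pSBar_of_mem {p : P} (hp : p ∈ S.1) : S ∈ pSBar p := fun _ => S.wedge_of_mem hp

lemma mem_of_mem_pSBar_of_starBelow {p f : P} (hS : S ∈ pSBar p) (hpf : starBelow p f) :
    f ∈ S.1 := by
  obtain ⟨k, hk⟩ := hpf
  obtain ⟨x, hxS, hx⟩ := S.2.1 _ (isCap_level k)
  exact S.mem_of_le hxS (hk x hx (hS hxS))

lemma mem_of_starBelow {q r : P} (hq : q ∈ S.1) (hqr : starBelow q r) : r ∈ S.1 :=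
  S.mem_of_mem_pSBar_of_starBelow (S.mem_pSBar_of_mem hq) hqr

lemma eventually_level_le {f : P} (hf : f ∈ S.1) :
    ∀ᶠ n in atTop, ∀ b ∈ S.1, b ∈ level P n → b ≤ f := by
  obtain ⟨C, ⟨m, hmC⟩, hSC⟩ := S.exists_isCap_inter_eq_singleton hf
  refine eventually_atTop.2 ⟨m, fun n hmn b hb hbn => ?_⟩
  obtain ⟨e, he, hbe⟩ := hmC.of_level_le hmn b hbn
  have hef : e ∈ ({f} : Set P) := hSC ▸ ⟨S.mem_of_le hb hbe, he⟩
  exact hef ▸ hbe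

lemma exists_starBelow_of_finset (hreg : IsRegular P) {F : Finset P} (hF : ↑F ⊆ S.1) :
    ∃ p ∈ S.1, ∀ f ∈ F, starBelow p f := by
  obtain ⟨m, hm⟩ := ((eventually_all_finset F).2 fun f hf => S.eventually_level_le (hF hf)).exists
  obtain ⟨n, -, hnm⟩ := hreg m
  obtain ⟨p, hpS, hp⟩ := S.2.1 _ (isCap_level n)
  obtain ⟨b, hb, hpb⟩ := hnm p hp
  exact ⟨p, hpS, fun f hf => hpb.trans_le (hm f hf b (S.mem_of_starBelow hpS hpb) hb)⟩

lemma exists_starBelow (hreg : IsRegular P) {r : P} (hr : r ∈ S.1) :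
    ∃ q ∈ S.1, starBelow q r := by
  obtain ⟨q, hq, hqr⟩ := S.exists_starBelow_of_finset hreg (F := {r}) (by simpa using hr)
  exact ⟨q, hq, hqr r (Finset.mem_singleton_self r)⟩

end SpecT

section Spectrum

variable {P : Type*} [PartialOrder P]

lemma pSBar_mono {p p' : P} (hpp' : p ≤ p') : pSBar p ⊆ pSBar p' :=
  fun _ hS => hS.trans (wedgeSet_mono hpp')

lemma pSBar_nonempty (hP : IsOmegaPoset P) (r : P) : (pSBar r).Nonempty := by
  obtain ⟨N, hN⟩ := hP.2 r
  have hfreq : ∃ᶠ n in atTop, (level P n ∩ {z | z ≤ r}).Nonempty :=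
    (eventually_ge_atTop N).frequently.mono fun n hNn => exists_mem_level_le (cone_mono hNn hN)
  obtain ⟨T, hT, hTr⟩ := (isSelector_upperClosure hfreq).exists_spec_subset hP.1
  refine ⟨⟨T, hT⟩, fun x hx => ?_⟩
  obtain ⟨z, hzr, hzx⟩ := mem_upperClosure.1 (hTr hx)
  exact ⟨z, hzr, hzx⟩

-- Compactness of the spectrum in disguise: were the statement false, a minimal selector inside
-- the upper closure of the counterexamples would contain no witness.
lemma exists_isCap_of_forall_spec (hfin : ∀ n, (level P n).Finite) {A G : Set P}
    (hA : IsUpperSet A) (hG : IsLowerSet G) (h : ∀ S : SpecT P, S.1 ⊆ A → (S.1 ∩ G).Nonempty) :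
    ∃ C, IsCap C ∧ ∀ c ∈ C, c ∈ A → c ∈ G := by
  refine ⟨{c | c ∈ A → c ∈ G}, ?_, fun _ hc => hc⟩
  by_contra hC
  have hbad : ∀ n, (level P n ∩ (A \ G)).Nonempty := by
    intro n
    by_contra hn
    refine hC ⟨n, fun a ha => ⟨a, fun haA => ?_, le_rfl⟩⟩
    by_contra haG
    exact hn ⟨a, ha, haA, haG⟩
  obtain ⟨T, hT, hTbad⟩ :=
    (isSelector_upperClosure (Frequently.of_forall hbad)).exists_spec_subset hfin
  have hTA : T ⊆ A := fun x hx =>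
    let ⟨_, hz, hzx⟩ := mem_upperClosure.1 (hTbad hx)
    hA hzx hz.1
  obtain ⟨x, hxT, hxG⟩ := h ⟨T, hT⟩ hTA
  obtain ⟨z, hz, hzx⟩ := mem_upperClosure.1 (hTbad hxT)
  exact hz.2 (hG hzx hxG)

end Spectrum

section Continuity

variable {P Q : Type*} [PartialOrder P] [PartialOrder Q]

lemma isOpen_pSOpen (p : P) : IsOpen (pSOpen p) :=
  TopologicalSpace.GenerateOpen.basic _ ⟨p, rfl⟩

lemma exists_finset_of_mem_isOpen {U : Set (SpecT P)} (hU : IsOpen U) {S : SpecT P}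
    (hS : S ∈ U) : ∃ F : Finset P, ↑F ⊆ S.1 ∧ ∀ S' : SpecT P, ↑F ⊆ S'.1 → S' ∈ U := by
  classical
  induction hU with
  | basic V hV =>
    obtain ⟨p, rfl⟩ := hV
    exact ⟨{p}, by simpa using hS, fun S' hS' => hS' (Finset.mem_singleton_self p)⟩
  | univ => exact ⟨∅, by simp, fun _ _ => Set.mem_univ _⟩
  | inter U V _ _ ihU ihV =>
    obtain ⟨F₁, hF₁S, hF₁⟩ := ihU hS.1
    obtain ⟨F₂, hF₂S, hF₂⟩ := ihV hS.2
    refine ⟨F₁ ∪ F₂, by simpa using ⟨hF₁S, hF₂S⟩, fun S' hS' => ?_⟩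
    rw [Finset.coe_union, Set.union_subset_iff] at hS'
    exact ⟨hF₁ S' hS'.1, hF₂ S' hS'.2⟩
  | sUnion 𝒰 _ ih =>
    obtain ⟨U, hU, hSU⟩ := hS
    obtain ⟨F, hFS, hF⟩ := ih U hU hSU
    exact ⟨F, hFS, fun S' hS' => ⟨U, hU, hF S' hS'⟩⟩

variable {φ : SpecT P → SpecT Q}

lemma relPhi_of_le {q : Q} {p p' : P} (h : relPhi φ q p) (hp'p : p' ≤ p) : relPhi φ q p' :=
  fun S hS => h S (pSBar_mono hp'p hS)

lemma exists_relPhi (hregP : IsRegular P) (hφ : Continuous φ) (S : SpecT P) {q : Q}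
    (hq : q ∈ (φ S).1) : ∃ p ∈ S.1, relPhi φ q p := by
  obtain ⟨F, hFS, hF⟩ := exists_finset_of_mem_isOpen ((isOpen_pSOpen q).preimage hφ) hq
  obtain ⟨p, hpS, hpF⟩ := S.exists_starBelow_of_finset hregP hFS
  exact ⟨p, hpS, fun S' hS' => hF S' fun f hf => S'.mem_of_mem_pSBar_of_starBelow hS' (hpF f hf)⟩

end Continuity

section Refiners

variable {P Q : Type*} [PartialOrder P] [PartialOrder Q] {φ : SpecT P → SpecT Q}

lemma isRefinerRel_relPhi (hfin : ∀ n, (level P n).Finite) (hregP : IsRegular P)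
    (hφ : Continuous φ) : IsRefinerRel (relPhi φ) := by
  intro C hC
  obtain ⟨B, hB, hBC⟩ := exists_isCap_of_forall_spec hfin isUpperSet_univ
    (G := {b | ∃ c ∈ C, relPhi φ c b})
    (fun _ _ hb'b ⟨c, hc, hcb⟩ => ⟨c, hc, relPhi_of_le hcb hb'b⟩)
    (fun S _ => by
      obtain ⟨c, hcφ, hcC⟩ := (φ S).2.1 C hC
      obtain ⟨p, hpS, hcp⟩ := exists_relPhi hregP hφ S hcφ
      exact ⟨p, hpS, c, hcC, hcp⟩)
  exact ⟨B, hB, fun b hb => hBC b hb trivial⟩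

lemma wedgePres_relPhi (hP : IsOmegaPoset P) : WedgePres (relPhi φ) := by
  rintro q p p' q' hqp ⟨r, hrp, hrp'⟩ hq'p'
  obtain ⟨S, hS⟩ := pSBar_nonempty hP r
  exact (φ S).wedge_of_mem (hqp S (pSBar_mono hrp hS)) (hq'p' S (pSBar_mono hrp' hS))

lemma specMapOf_relPhi (hregP : IsRegular P) (hregQ : IsRegular Q) (hφ : Continuous φ) :
    specMapOf (relPhi φ) φ := by
  intro S
  ext r
  constructor
  · intro hr
    obtain ⟨q, hq, hqr⟩ := (φ S).exists_starBelow hregQ hr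
    obtain ⟨p, hpS, hqp⟩ := exists_relPhi hregP hφ S hq
    exact ⟨p, hpS, q, hqp, hqr⟩
  · rintro ⟨p, hpS, q, hqp, hqr⟩
    exact (φ S).mem_of_starBelow (hqp S (S.mem_pSBar_of_mem hpS)) hqr

lemma relStar_starAboveComp_iff_relPhi (hfin : ∀ n, (level P n).Finite) {R : Q → P → Prop}
    (hRφ : specMapOf R φ) (hR : ∀ {q c c'}, R q c → c' ≤ c → R q c') {q : Q} {p : P} :
    relStar (starAboveComp R) q p ↔ relPhi φ q p := by
  constructor
  · rintro ⟨C, hC, hCR⟩ S hS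
    obtain ⟨c, hcS, hcC⟩ := S.2.1 C hC
    obtain ⟨q', hq'q, hq'c⟩ := hCR c hcC (hS hcS)
    show q ∈ (φ S).1
    rw [hRφ S]
    exact ⟨c, hcS, q', hq'c, hq'q⟩
  · intro h
    refine exists_isCap_of_forall_spec hfin (isUpperSet_wedgeSet p)
      (G := {c | starAboveComp R q c})
      (fun _ _ hc'c ⟨q', hq'q, hq'c⟩ => ⟨q', hq'q, hR hq'c hc'c⟩) fun S hS => ?_
    have hq : q ∈ (φ S).1 := h S hS
    rw [hRφ S] at hq
    obtain ⟨p', hp'S, q', hq'p', hq'q⟩ := hq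
    exact ⟨p', hp'S, q', hq'q, hq'p'⟩

lemma eq_relPhi_of_relStar (hfin : ∀ n, (level P n).Finite) {R : Q → P → Prop}
    (hR : ∀ q p, R q p ↔ relStar (starAboveComp R) q p) (hRφ : specMapOf R φ) :
    R = relPhi φ := by
  have hanti : ∀ {q c c'}, R q c → c' ≤ c → R q c' := fun h hc'c =>
    (hR _ _).2 (relStar_of_le ((hR _ _).1 h) hc'c)
  funext q p
  exact propext ((hR q p).trans (relStar_starAboveComp_iff_relPhi hfin hRφ hanti))

end Refiners

end OP

open OP in
theorem stmt9_general {P Q : Type*} [PartialOrder P] [PartialOrder Q]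
    (hP : IsOmegaPoset P) (hregP : IsRegular P) (hregQ : IsRegular Q)
    (φ : SpecT P → SpecT Q) (hφ : Continuous φ) :
    IsStrongRefiner (relPhi φ) ∧ specMapOf (relPhi φ) φ ∧
      ∀ R : Q → P → Prop, IsStrongRefiner R → specMapOf R φ → R = relPhi φ := by
  have hφR : specMapOf (relPhi φ) φ := specMapOf_relPhi hregP hregQ hφ
  refine ⟨⟨isRefinerRel_relPhi hP.1 hregP hφ, wedgePres_relPhi hP, fun q p => ?_⟩, hφR,
    fun R hR hRφ => eq_relPhi_of_relStar hP.1 hR.2.2 hRφ⟩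
  exact (relStar_starAboveComp_iff_relPhi hP.1 hφR relPhi_of_le).symm

open OP in
/-- `⊐_φ` is the unique strong refiner inducing a given continuous map `φ`. -/
theorem stmt9 {P Q : Type*} [PartialOrder P] [PartialOrder Q]
    (hP : IsOmegaPoset P) (hregP : IsRegular P) (hQ : IsOmegaPoset Q) (hregQ : IsRegular Q)
    (φ : SpecT P → SpecT Q) (hφ : Continuous φ) :
    IsStrongRefiner (relPhi φ) ∧ specMapOf (relPhi φ) φ ∧
      ∀ R : Q → P → Prop, IsStrongRefiner R → specMapOf R φ → R = relPhi φ :=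
  stmt9_general hP hregP hregQ φ hφ
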